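/- With the data below, for every integer j with 0 ≤ |j| ≤ m+1 the limit lim_{n→∞} u_{n,j} exists and equals U_{|j|}, where: if |j| = 2l then U_{|j|} = Σ_{p=max{l,1}}^{⌊(m+1)/2⌋} (d_{2p−1}/(2p)) · C(2p, p−l) · 2^{−2p}, and if |j| = 2l+1 then U_{|j|} = Σ_{p=l}^{⌊m/2⌋} (d_{2p}/(2p+1)) · C(2p+1, p−l) · 2^{−(2p+1)} (C denotes the binomial coefficient). -/

import Mathlib

/-! The denominator `λ_{n+j} - λ̃` and the factor `λ_n - λ̃` both grow like `n²`, while `A_n`, `C_n`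
are `O(n)` and all remaining coefficients converge; hence only the two `(λ_n - λ̃)`-terms survive
and `u_{n,j} → ∑_{k=1}^{m+1} (d_{k-1}/k) s_{k,j}`. As `s_{k,j}` vanishes unless `k ≥ |j|` and
`k ≡ j (mod 2)`, substituting `k = 2p + (|j| mod 2)` turns this sum into the closed form. -/

open Finset Filter Topology

noncomputable def binomWeight (k : ℕ) (j : ℤ) : ℝ :=
  if |j| ≤ (k : ℤ) ∧ Even ((k : ℤ) - j) then
    (k.choose (((k : ℤ) - j).toNat / 2) : ℝ) / 2 ^ k
  else 0

theorem binomWeight_two_mul_add {j : ℤ} {l r p : ℕ} (hj : j.natAbs = 2 * l + r) (hlp : l ≤ p) :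
    binomWeight (2 * p + r) j = ((2 * p + r).choose (p - l) : ℝ) / 2 ^ (2 * p + r) := by
  have hidx : (2 * p + r).choose ((((2 * p + r : ℕ) : ℤ) - j).toNat / 2) =
      (2 * p + r).choose (p - l) := by
    rcases le_or_gt 0 j with h | h
    · congr 1; omega
    · exact Nat.choose_symm_of_eq_add (by omega)
  rw [binomWeight, if_pos ⟨by rw [Int.abs_eq_natAbs]; omega, by rw [Int.even_iff]; omega⟩, hidx]

theorem binomWeight_eq_zero {j : ℤ} {l r k : ℕ} (hj : j.natAbs = 2 * l + r)
    (hk : ∀ p, l ≤ p → 2 * p + r ≠ k) : binomWeight k j = 0 := by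
  rw [binomWeight, if_neg]
  rintro ⟨hle, hev⟩
  rw [Int.abs_eq_natAbs] at hle
  rw [Int.even_iff] at hev
  exact hk ((k - r) / 2) (by omega) (by omega)

theorem sum_mul_binomWeight_eq {s t : Finset ℕ} (f : ℕ → ℝ) {j : ℤ} {l r : ℕ}
    (hj : j.natAbs = 2 * l + r) (ht : ∀ p, p ∈ t ↔ l ≤ p ∧ 2 * p + r ∈ s) :
    ∑ k ∈ s, f k * binomWeight k j =
      ∑ p ∈ t, f (2 * p + r) * ((2 * p + r).choose (p - l) / 2 ^ (2 * p + r)) := by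
  symm
  refine sum_of_injOn (fun p => 2 * p + r) (fun p _ q _ h => by simp only at h; omega)
    (fun p hp => ((ht p).1 hp).2) (fun k hk hkt => ?_) (fun p hp => ?_)
  · rw [binomWeight_eq_zero hj fun p hlp hpk => hkt ⟨p, (ht p).2 ⟨hlp, hpk ▸ hk⟩, hpk⟩, mul_zero]
  · rw [binomWeight_two_mul_add hj ((ht p).1 hp).1]

theorem sum_Icc_div_mul_binomWeight (m : ℕ) (d : ℕ → ℝ) (j : ℤ) :
    ∑ k ∈ Icc 1 (m + 1), d (k - 1) / k * binomWeight k j =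
      if Even j then
        ∑ p ∈ Icc (max (j.natAbs / 2) 1) ((m + 1) / 2),
          d (2 * p - 1) / (2 * p) * ((2 * p).choose (p - j.natAbs / 2) : ℝ) / 2 ^ (2 * p)
      else
        ∑ p ∈ Icc (j.natAbs / 2) (m / 2),
          d (2 * p) / (2 * p + 1) * ((2 * p + 1).choose (p - j.natAbs / 2) : ℝ)
            / 2 ^ (2 * p + 1) := by
  have hj := Nat.div_add_mod j.natAbs 2
  split_ifs with hev
  · have h0 : j.natAbs % 2 = 0 := Nat.even_iff.mp (Int.natAbs_even.mpr hev)
    refine (sum_mul_binomWeight_eq _ (l := j.natAbs / 2) (r := 0) (by omega) fun p => ?_).trans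
      (sum_congr rfl fun p _ => ?_)
    · simp only [mem_Icc]
      omega
    · push_cast [add_zero]
      ring
  · have h1 : j.natAbs % 2 = 1 := Nat.odd_iff.mp (Int.natAbs_odd.mpr (Int.not_even_iff_odd.mp hev))
    refine (sum_mul_binomWeight_eq _ (l := j.natAbs / 2) (r := 1) (by omega) fun p => ?_).trans
      (sum_congr rfl fun p _ => ?_)
    · simp only [mem_Icc]
      omega
    · push_cast
      ring

theorem tendsto_finsetSum_mul_add {ι α R : Type*} [Semiring R] [TopologicalSpace R]
    [IsTopologicalSemiring R] {l : Filter α} (s : Finset ι) {a : ι → α → R} {a₀ b : ι → R}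
    {e : ι → α → R} (ha : ∀ k ∈ s, Tendsto (a k) l (𝓝 (a₀ k)))
    (he : ∀ k ∈ s, Tendsto (e k) l (𝓝 0)) :
    Tendsto (fun x => ∑ k ∈ s, a k x * (b k + e k x)) l (𝓝 (∑ k ∈ s, a₀ k * b k)) :=
  tendsto_finsetSum s fun k hk => by
    simpa using (ha k hk).mul (tendsto_const_nhds.add (he k hk))

theorem tendsto_inv_mul_of_tendsto_div {α 𝕜 : Type*} [Field 𝕜] [TopologicalSpace 𝕜]
    [ContinuousInv₀ 𝕜] [ContinuousMul 𝕜] {l : Filter α} {g w X : α → 𝕜} {τ : 𝕜}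
    (hw : ∀ᶠ x in l, w x ≠ 0) (hg : Tendsto (fun x => g x / w x) l (𝓝 1))
    (hX : Tendsto (fun x => X x / w x) l (𝓝 τ)) : Tendsto (fun x => (g x)⁻¹ * X x) l (𝓝 τ) := by
  have h := hX.div hg one_ne_zero
  rw [div_one] at h
  exact h.congr' (hw.mono fun x hx => by
    rw [Pi.div_apply, div_div_div_cancel_right₀ hx, div_eq_inv_mul])

theorem tendsto_quadratic_div_sq (a b c : ℝ) :
    Tendsto (fun n : ℕ => ((n + a) * (n + b) - c) / (n : ℝ) ^ 2) atTop (𝓝 1) := by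
  have hinv := tendsto_inv_atTop_nhds_zero_nat (𝕜 := ℝ)
  have h := (tendsto_const_nhds (x := 1)).add ((hinv.const_mul (a + b)).add
    ((hinv.pow 2).const_mul (a * b - c)))
  rw [mul_zero, zero_pow two_ne_zero, mul_zero, add_zero, add_zero] at h
  refine h.congr' ((eventually_ne_atTop 0).mono fun n hn => ?_)
  have hn : (n : ℝ) ≠ 0 := Nat.cast_ne_zero.mpr hn
  field_simp
  ring

theorem tendsto_eigenvalue_sub_div_sq {lam : ℤ → ℝ} {κ : ℝ} (hlam : ∀ n : ℤ, lam n = n * (n + κ))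
    (j : ℤ) (t : ℝ) : Tendsto (fun n : ℕ => (lam (n + j) - t) / (n : ℝ) ^ 2) atTop (𝓝 1) :=
  (tendsto_quadratic_div_sq j (j + κ) t).congr fun n => by
    rw [hlam]
    push_cast
    ring

theorem tendsto_div_sq_of_quadratic_dominant {A C S₁ S₂ S₃ h T : ℕ → ℝ} {a c σ₁ σ₂ σ₃ τ : ℝ}
    (hA : Tendsto (fun n => A n / n) atTop (𝓝 a)) (hC : Tendsto (fun n => C n / n) atTop (𝓝 c))
    (hS₁ : Tendsto S₁ atTop (𝓝 σ₁)) (hS₂ : Tendsto S₂ atTop (𝓝 σ₂))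
    (hS₃ : Tendsto S₃ atTop (𝓝 σ₃)) (hh : Tendsto (fun n => h n / (n : ℝ) ^ 2) atTop (𝓝 1))
    (hT : Tendsto T atTop (𝓝 τ)) :
    Tendsto (fun n => (A n * S₁ n + C n * S₂ n + S₃ n + h n * T n) / (n : ℝ) ^ 2) atTop
      (𝓝 τ) := by
  have hinv := tendsto_inv_atTop_nhds_zero_nat (𝕜 := ℝ)
  have hlim := (((hA.mul hS₁).mul hinv).add ((hC.mul hS₂).mul hinv)).add
    (hS₃.mul (hinv.pow 2)) |>.add (hh.mul hT)
  simp only [mul_zero, zero_pow two_ne_zero, add_zero, zero_add, one_mul] at hlim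
  exact hlim.congr fun n => by ring

theorem X1Jacobi_recurrence_coefficients_limit
    (m : ℕ)
    (d c : ℕ → ℝ) (α β : ℝ)
    (lam : ℤ → ℝ) (hlam : ∀ n : ℤ, lam n = n * (n + α + β + 1))
    (tlam : ℝ)
    (s : ℕ → ℤ → ℝ)
    (hs : ∀ (k : ℕ) (j : ℤ), s k j =
      if |j| ≤ (k : ℤ) ∧ Even ((k : ℤ) - j) then
        (k.choose (((k : ℤ) - j).toNat / 2) : ℝ) / 2 ^ k
      else 0)
    (A B C : ℕ → ℝ)
    (hA : Tendsto (fun n : ℕ => A n / n) atTop (𝓝 (1 / 2)))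
    (hC : Tendsto (fun n : ℕ => C n / n) atTop (𝓝 (-(1 / 2))))
    (hB : Tendsto (fun n : ℕ => B n) atTop (𝓝 ((α - β) / 2)))
    (e1 e2 e3 e4 : ℕ → ℕ → ℤ → ℝ) (e5 : ℕ → ℤ → ℝ)
    (he1 : ∀ (k : ℕ) (j : ℤ), Tendsto (fun n : ℕ => e1 k n j) atTop (𝓝 0))
    (he2 : ∀ (k : ℕ) (j : ℤ), Tendsto (fun n : ℕ => e2 k n j) atTop (𝓝 0))
    (he3 : ∀ (k : ℕ) (j : ℤ), Tendsto (fun n : ℕ => e3 k n j) atTop (𝓝 0))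
    (he4 : ∀ (k : ℕ) (j : ℤ), Tendsto (fun n : ℕ => e4 k n j) atTop (𝓝 0))
    (he5 : ∀ j : ℤ, Tendsto (fun n : ℕ => e5 n j) atTop (𝓝 0))
    (u : ℕ → ℤ → ℝ)
    (hu : ∀ (n : ℕ) (j : ℤ), |j| ≤ (m : ℤ) + 1 → u n j =
      (lam ((n : ℤ) + j) - tlam)⁻¹ *
        (A n * ∑ k ∈ Finset.range (m + 1), d k * (s k (j - 1) + e1 k n j)
          + C n * ∑ k ∈ Finset.range (m + 1), d k * (s k (j + 1) + e2 k n j)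
          + ∑ k ∈ Finset.range (m + 1), (B n * d k - c k) * (s k j + e3 k n j)
          + (lam (n : ℤ) - tlam) *
              ∑ k ∈ Finset.Icc 1 m, (d (k - 1) / k) * (s k j + e4 k n j)
          + (lam (n : ℤ) - tlam) * (d m / (m + 1)) * (s (m + 1) j + e5 n j)))
    (j : ℤ) (hj : |j| ≤ (m : ℤ) + 1) :
    Tendsto (fun n : ℕ => u n j) atTop (𝓝
      (if Even j then
        ∑ p ∈ Finset.Icc (max (j.natAbs / 2) 1) ((m + 1) / 2),
          d (2 * p - 1) / (2 * p) * ((2 * p).choose (p - j.natAbs / 2) : ℝ) / 2 ^ (2 * p)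
      else
        ∑ p ∈ Finset.Icc (j.natAbs / 2) (m / 2),
          d (2 * p) / (2 * p + 1) * ((2 * p + 1).choose (p - j.natAbs / 2) : ℝ)
            / 2 ^ (2 * p + 1))) := by
  obtain rfl : s = binomWeight := funext fun k => funext (hs k)
  have hlam' (n : ℤ) : lam n = n * (n + (α + β + 1)) := by rw [hlam, ← add_assoc, ← add_assoc]
  have hden := tendsto_eigenvalue_sub_div_sq hlam' j tlam
  have hnum : Tendsto (fun n : ℕ => (lam n - tlam) / (n : ℝ) ^ 2) atTop (𝓝 1) := by
    simpa using tendsto_eigenvalue_sub_div_sq hlam' 0 tlam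
  have hS₁ := tendsto_finsetSum_mul_add (range (m + 1)) (a := fun k _ => d k)
    (b := fun k => binomWeight k (j - 1)) (fun k _ => tendsto_const_nhds) fun k _ => he1 k j
  have hS₂ := tendsto_finsetSum_mul_add (range (m + 1)) (a := fun k _ => d k)
    (b := fun k => binomWeight k (j + 1)) (fun k _ => tendsto_const_nhds) fun k _ => he2 k j
  have hS₃ := tendsto_finsetSum_mul_add (range (m + 1)) (b := fun k => binomWeight k j)
    (fun k _ => (hB.mul_const (d k)).sub_const (c k)) fun k _ => he3 k j
  have hS₄ := tendsto_finsetSum_mul_add (Icc 1 m) (a := fun k _ => d (k - 1) / k)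
    (b := fun k => binomWeight k j) (fun k _ => tendsto_const_nhds) fun k _ => he4 k j
  have hS₅ := ((he5 j).const_add (binomWeight (m + 1) j)).const_mul (d m / (m + 1))
  rw [add_zero] at hS₅
  have key := tendsto_inv_mul_of_tendsto_div
    ((eventually_ne_atTop 0).mono fun n hn => by positivity) hden
    (tendsto_div_sq_of_quadratic_dominant hA hC hS₁ hS₂ hS₃ hnum (hS₄.add hS₅))
  rw [← sum_Icc_div_mul_binomWeight, sum_Icc_succ_top (by omega), Nat.add_sub_cancel]
  push_cast
  refine key.congr fun n => ?_
  rw [hu n j hj]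
  ring
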